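/- As an identity of formal power series in q with integer coefficients, the product ∏_{n≥1} (1 - q^{5n})(1 - q^{5n-1})(1 - q^{5n-4}) equals the sum ∑_{k∈ℤ} (-1)^k q^{k(5k+3)/2}. -/

import Mathlib

open PowerSeries

noncomputable instance : TopologicalSpace (PowerSeries ℤ) :=
  inferInstanceAs (TopologicalSpace ((Unit →₀ ℕ) → ℤ))

/-!
With `p = q ^ a`, the `q`-binomial theorem
`∏_{j<n} (w + p^j z) = ∑_k [n, k]_p p^(k choose 2) z^k w^(n-k)` at `n = 2N`, `w = q^(aN)`,
`z = -q^b` becomes, after cancelling a power of `q`, the finite triple product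
`∏_{n<N} (1 - q^(an+b)) (1 - q^(an+a-b)) = ∑_{k ≤ 2N} (-1)^(N+k) [2N, k]_p q^θ(k-N)`.
From `[n, k]_p (p; p)_k (p; p)_(n-k) = (p; p)_n` and `(p; p)_n ≡ (p; p)_r mod p^(r+1)` for `n ≥ r`
one gets `(p; p)_N [2N, k]_p ≡ 1 mod p^(r+1)` with `r = min(k, 2N - k)`. Multiplying by `(p; p)_N`
therefore shows that the `N`-th partial product agrees with `∑_{|m| ≤ N} (-1)^m q^θ(m)` modulo
`q^N`, and the identity follows as `N → ∞`.
-/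

open Finset

section GaussBinom

variable {R : Type*} [CommSemiring R] (p : R)

def gaussBinom : ℕ → ℕ → R
  | _, 0 => 1
  | 0, _ + 1 => 0
  | n + 1, k + 1 => gaussBinom n (k + 1) + p ^ (n - k) * gaussBinom n k

@[simp]
lemma gaussBinom_zero_right (n : ℕ) : gaussBinom p n 0 = 1 := by
  cases n <;> rfl

lemma gaussBinom_succ_succ (n k : ℕ) :
    gaussBinom p (n + 1) (k + 1) = gaussBinom p n (k + 1) + p ^ (n - k) * gaussBinom p n k :=
  rfl

lemma gaussBinom_eq_zero_of_lt {n k : ℕ} (h : n < k) : gaussBinom p n k = 0 := by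
  induction n generalizing k with
  | zero => obtain ⟨k, rfl⟩ := Nat.exists_eq_add_of_lt h; rfl
  | succ n ih =>
    obtain ⟨k, rfl⟩ := Nat.exists_eq_add_of_lt (Nat.zero_lt_of_lt h)
    rw [gaussBinom_succ_succ, ih (by omega), ih (by omega), mul_zero, add_zero]

@[simp]
lemma gaussBinom_self (n : ℕ) : gaussBinom p n n = 1 := by
  induction n with
  | zero => rfl
  | succ n ih => rw [gaussBinom_succ_succ, gaussBinom_eq_zero_of_lt p n.lt_succ_self, ih]; simp

theorem prod_range_add_pow_mul_eq_sum_gaussBinom (w z : R) (n : ℕ) :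
    ∏ j ∈ range n, (w + p ^ j * z) =
      ∑ k ∈ range (n + 1), gaussBinom p n k * p ^ k.choose 2 * z ^ k * w ^ (n - k) := by
  induction n with
  | zero => simp
  | succ n ih =>
    have hw : (∑ k ∈ range (n + 1), gaussBinom p n k * p ^ k.choose 2 * z ^ k * w ^ (n - k)) * w
        = ∑ k ∈ range (n + 1),
            gaussBinom p n (k + 1) * p ^ (k + 1).choose 2 * z ^ (k + 1) * w ^ (n - k)
          + w ^ (n + 1) := by
      rw [sum_range_succ' _ n, sum_range_succ _ n, gaussBinom_eq_zero_of_lt p n.lt_succ_self,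
        add_mul, sum_mul]
      simp only [gaussBinom_zero_right, Nat.choose_zero_succ, pow_zero, zero_mul, add_zero,
        one_mul, Nat.sub_zero, ← pow_succ]
      congr 1
      refine sum_congr rfl fun k hk => ?_
      rw [mul_assoc, ← pow_succ, show n - (k + 1) + 1 = n - k by have := mem_range.mp hk; omega]
    have hz : (∑ k ∈ range (n + 1), gaussBinom p n k * p ^ k.choose 2 * z ^ k * w ^ (n - k))
        * (p ^ n * z) = ∑ k ∈ range (n + 1),
          p ^ (n - k) * gaussBinom p n k * p ^ (k + 1).choose 2 * z ^ (k + 1) * w ^ (n - k) := by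
      rw [sum_mul]
      refine sum_congr rfl fun k hk => ?_
      have hpow : p ^ n = p ^ (n - k) * p ^ k := by
        rw [← pow_add, Nat.sub_add_cancel (Nat.lt_succ_iff.mp (mem_range.mp hk))]
      rw [Nat.choose_succ_succ', Nat.choose_one_right, hpow]
      ring
    rw [prod_range_succ, ih, mul_add, hw, hz, sum_range_succ' _ (n + 1)]
    simp only [gaussBinom_succ_succ, gaussBinom_zero_right, Nat.choose_zero_succ, pow_zero,
      one_mul, Nat.sub_zero, Nat.add_sub_add_right]
    rw [add_right_comm, ← sum_add_distrib]
    simp only [add_mul]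

end GaussBinom

section QPochhammer

variable {R : Type*} [CommRing R] (p : R)

def qPochhammer (n : ℕ) : R := ∏ i ∈ range n, (1 - p ^ (i + 1))

@[simp]
lemma qPochhammer_zero : qPochhammer p 0 = 1 := rfl

lemma qPochhammer_succ (n : ℕ) :
    qPochhammer p (n + 1) = qPochhammer p n * (1 - p ^ (n + 1)) :=
  prod_range_succ _ _

theorem gaussBinom_mul_qPochhammer_mul_qPochhammer {n k : ℕ} (h : k ≤ n) :
    gaussBinom p n k * qPochhammer p k * qPochhammer p (n - k) = qPochhammer p n := by
  induction n generalizing k with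
  | zero => obtain rfl := Nat.le_zero.mp h; simp
  | succ n ih =>
    rcases k with _ | k
    · simp
    rcases h.eq_or_lt with heq | hlt
    · obtain rfl : k = n := by omega
      simp
    obtain ⟨j, rfl⟩ : ∃ j, n = k + 1 + j := ⟨n - (k + 1), by omega⟩
    have e₁ := ih (k := k + 1) (by omega)
    have e₂ := ih (k := k) (by omega)
    rw [show k + 1 + j - (k + 1) = j by omega, qPochhammer_succ] at e₁
    rw [show k + 1 + j - k = j + 1 by omega, qPochhammer_succ] at e₂
    rw [gaussBinom_succ_succ, show k + 1 + j - k = j + 1 by omega,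
      show k + 1 + j + 1 - (k + 1) = j + 1 by omega, qPochhammer_succ p j,
      qPochhammer_succ p (k + 1 + j), qPochhammer_succ p k]
    linear_combination (1 - p ^ (j + 1)) * e₁ + p ^ (j + 1) * (1 - p ^ (k + 1)) * e₂

lemma pow_succ_dvd_qPochhammer_sub {r n : ℕ} (h : r ≤ n) :
    p ^ (r + 1) ∣ qPochhammer p n - qPochhammer p r := by
  induction n, h using Nat.le_induction with
  | base => simp
  | succ n hrn ih =>
    rw [qPochhammer_succ, show qPochhammer p n * (1 - p ^ (n + 1)) - qPochhammer p r
      = (qPochhammer p n - qPochhammer p r) - qPochhammer p n * p ^ (n + 1) by ring]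
    exact dvd_sub ih (dvd_mul_of_dvd_right (pow_dvd_pow p (by omega)) _)

lemma isUnit_mk_qPochhammer (r : ℕ) :
    IsUnit (Ideal.Quotient.mk (Ideal.span {p ^ (r + 1)}) (qPochhammer p r)) := by
  have hnil : IsNilpotent (Ideal.Quotient.mk (Ideal.span {p ^ (r + 1)}) p) :=
    ⟨r + 1, by
      rw [← map_pow, Ideal.Quotient.eq_zero_iff_mem]
      exact Ideal.mem_span_singleton_self _⟩
  rw [qPochhammer, map_prod, IsUnit.prod_iff]
  intro i _
  rw [map_sub, map_one, map_pow]
  exact (hnil.pow_of_pos i.succ_ne_zero).isUnit_one_sub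

theorem pow_succ_dvd_qPochhammer_mul_gaussBinom_sub_one {m n k r : ℕ} (hk : k ≤ n)
    (hrk : r ≤ k) (hrnk : r ≤ n - k) (hrm : r ≤ m) :
    p ^ (r + 1) ∣ qPochhammer p m * gaussBinom p n k - 1 := by
  set π := Ideal.Quotient.mk (Ideal.span {p ^ (r + 1)})
  have hπ : ∀ {i}, r ≤ i → π (qPochhammer p i) = π (qPochhammer p r) := fun hi =>
    Ideal.Quotient.eq.mpr (Ideal.mem_span_singleton.mpr (pow_succ_dvd_qPochhammer_sub p hi))
  have hcancel := congrArg π (gaussBinom_mul_qPochhammer_mul_qPochhammer p hk)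
  rw [map_mul, map_mul, hπ hrk, hπ hrnk, hπ (hrk.trans hk)] at hcancel
  have hinv := (isUnit_mk_qPochhammer p r).mul_right_cancel (hcancel.trans (one_mul _).symm)
  rw [← Ideal.mem_span_singleton, ← Ideal.Quotient.eq, map_mul, map_one, hπ hrm, mul_comm, hinv]

end QPochhammer

section ThetaExponent

/-- `θ(m) = a * (m choose 2) + b * m`, a natural number when `b ≤ a`. -/
def thetaExponent (a b : ℕ) (m : ℤ) : ℕ := (m * (a * m + 2 * b - a) / 2).toNat

variable {a b : ℕ}

lemma two_mul_thetaExponent (hb : b ≤ a) (m : ℤ) :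
    2 * (thetaExponent a b m : ℤ) = m * (a * m + 2 * b - a) := by
  have heven : Even (m * (a * m + 2 * b - a)) := by
    rw [show m * (a * m + 2 * b - a) = a * (m * (m - 1)) + 2 * (b * m) by ring]
    exact ((Int.even_mul_pred_self m).mul_left _).add (even_two_mul _)
  have hnonneg : 0 ≤ m * (a * m + 2 * b - a) := by
    have hab : (0 : ℤ) ≤ a - b := by omega
    rcases le_or_gt 0 m with hm | hm
    · nlinarith [mul_nonneg (Int.natCast_nonneg a) (sub_nonneg.mpr (Int.le_self_sq m)),
        mul_nonneg (Int.natCast_nonneg b) hm]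
    · nlinarith [mul_nonneg (Int.natCast_nonneg a) (sub_nonneg.mpr (Int.le_self_sq (m + 1))),
        mul_nonneg hab (neg_nonneg.mpr hm.le)]
  rw [thetaExponent, Int.toNat_of_nonneg (by omega), Int.two_mul_ediv_two_of_even heven]

lemma natAbs_le_thetaExponent_add_one (ha : 0 < a) (hb : b ≤ a) (m : ℤ) :
    m.natAbs ≤ thetaExponent a b m + 1 := by
  have h := two_mul_thetaExponent hb m
  have ha' : (0 : ℤ) ≤ a - 1 := by omega
  have hab : (0 : ℤ) ≤ a - b := by omega
  zify
  rcases le_or_gt 0 m with hm | hm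
  · rw [abs_of_nonneg hm]
    nlinarith [mul_nonneg ha' (sub_nonneg.mpr (Int.le_self_sq m)), Int.le_self_sq (m - 1),
      mul_nonneg (Int.natCast_nonneg b) hm]
  · rw [abs_of_neg hm]
    nlinarith [mul_nonneg ha' (sub_nonneg.mpr (Int.le_self_sq (m + 1))), Int.le_self_sq (m + 2),
      mul_nonneg hab (neg_nonneg.mpr hm.le)]

lemma two_mul_natCast_choose_two (n : ℕ) : 2 * (n.choose 2 : ℤ) = n * (n - 1) := by
  have h : 2 * n.choose 2 = n * (n - 1) := by
    rw [Nat.choose_two_right, Nat.two_mul_div_two_of_even (Nat.even_mul_pred_self n)]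
  rcases n with _ | n
  · simp
  · push_cast [Nat.add_sub_cancel] at h ⊢
    rw [add_sub_cancel_right]
    exact_mod_cast h

lemma add_thetaExponent_sub_eq (hb : b ≤ a) {N k : ℕ} (hk : k ≤ 2 * N) :
    a * N * N + (a * N.choose 2 + b * N) + thetaExponent a b (k - N)
      = a * k.choose 2 + b * k + a * N * (2 * N - k) := by
  zify [hk]
  apply mul_left_cancel₀ (two_ne_zero : (2 : ℤ) ≠ 0)
  linear_combination a * two_mul_natCast_choose_two N + two_mul_thetaExponent hb (k - N)
    - a * two_mul_natCast_choose_two k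

end ThetaExponent

section FiniteTripleProduct

variable {R : Type*} [CommRing R] {q : R} {a b : ℕ}

lemma prod_range_two_mul_pow_sub_pow (hb : b ≤ a) (N : ℕ) :
    ∏ j ∈ range (2 * N), (q ^ (a * N) - q ^ (a * j + b))
      = (-1) ^ N * q ^ (a * N * N + (a * N.choose 2 + b * N)) *
        ∏ n ∈ range N, (1 - q ^ (a * n + b)) * (1 - q ^ (a * n + (a - b))) := by
  have hsum : ∑ j ∈ range N, (a * j + b) = a * N.choose 2 + b * N := by
    rw [sum_add_distrib, ← mul_sum, sum_range_id, ← Nat.choose_two_right, sum_const, card_range,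
      smul_eq_mul, mul_comm N b]
  -- for `j < N` the factor has the wrong sign and pairs with `n = N - 1 - j`
  have hlow : ∀ j ∈ range N, q ^ (a * N) - q ^ (a * j + b)
      = -q ^ (a * j + b) * (1 - q ^ (a * (N - 1 - j) + (a - b))) := by
    intro j hj
    have hexp : a * j + b + (a * (N - 1 - j) + (a - b)) = a * N := by
      have := mem_range.mp hj
      zify [hb, (by omega : j ≤ N - 1), (by omega : 1 ≤ N)]
      ring
    rw [mul_sub, mul_one, neg_mul, ← pow_add, hexp]
    ring
  have hhigh : ∀ n, q ^ (a * N) - q ^ (a * (N + n) + b) = q ^ (a * N) * (1 - q ^ (a * n + b)) :=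
    fun n => by ring
  rw [two_mul, prod_range_add, prod_congr rfl hlow, prod_mul_distrib, prod_neg,
    prod_pow_eq_pow_sum, hsum, card_range,
    prod_range_reflect (fun n => 1 - q ^ (a * n + (a - b))) N]
  simp only [hhigh, prod_mul_distrib, prod_const, card_range]
  ring

theorem prod_one_sub_pow_mul_one_sub_pow_eq_sum_gaussBinom (hq : IsLeftRegular q) (hb : b ≤ a)
    (N : ℕ) :
    ∏ n ∈ range N, (1 - q ^ (a * n + b)) * (1 - q ^ (a * n + (a - b))) =
      ∑ k ∈ range (2 * N + 1),
        (-1) ^ (N + k) * gaussBinom (q ^ a) (2 * N) k * q ^ thetaExponent a b (k - N) := by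
  have hterm : ∀ k ∈ range (2 * N + 1),
      gaussBinom (q ^ a) (2 * N) k * (q ^ a) ^ k.choose 2 * (-q ^ b) ^ k
          * (q ^ (a * N)) ^ (2 * N - k)
        = (-1) ^ N * q ^ (a * N * N + (a * N.choose 2 + b * N)) *
          ((-1) ^ (N + k) * gaussBinom (q ^ a) (2 * N) k * q ^ thetaExponent a b (k - N)) := by
    intro k hk
    have hsign : (-1 : R) ^ k = (-1) ^ N * (-1) ^ (N + k) := by
      rw [← pow_add, ← add_assoc, ← two_mul, pow_add, pow_mul, neg_one_sq, one_pow, one_mul]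
    calc _ = (-1) ^ k * gaussBinom (q ^ a) (2 * N) k
          * q ^ (a * k.choose 2 + b * k + a * N * (2 * N - k)) := by
          rw [neg_pow, pow_add, pow_add, pow_mul, pow_mul, pow_mul]
          ring
      _ = _ := by
          rw [← add_thetaExponent_sub_eq hb (Nat.lt_succ_iff.mp (mem_range.mp hk)), pow_add,
            hsign]
          ring
  have hbin := prod_range_add_pow_mul_eq_sum_gaussBinom (q ^ a) (q ^ (a * N)) (-q ^ b) (2 * N)
  have hfactor : ∀ j ∈ range (2 * N),
      q ^ (a * N) + (q ^ a) ^ j * -q ^ b = q ^ (a * N) - q ^ (a * j + b) := fun j _ => by ring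
  rw [prod_congr rfl hfactor, prod_range_two_mul_pow_sub_pow hb, sum_congr rfl hterm,
    ← mul_sum] at hbin
  exact ((isUnit_neg_one.pow N).isRegular.left.mul (hq.pow _)) hbin

theorem pow_dvd_prod_sub_sum_thetaExponent (hq : IsLeftRegular q) (ha : 0 < a) (hb : b ≤ a)
    (N : ℕ) :
    q ^ N ∣ ∏ n ∈ range N,
        (1 - q ^ (a * n + a)) * (1 - q ^ (a * n + b)) * (1 - q ^ (a * n + (a - b)))
      - ∑ m ∈ Icc (-N : ℤ) N, (-1) ^ m.natAbs * q ^ thetaExponent a b m := by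
  have hprod : ∏ n ∈ range N,
      (1 - q ^ (a * n + a)) * (1 - q ^ (a * n + b)) * (1 - q ^ (a * n + (a - b)))
        = qPochhammer (q ^ a) N *
          ∏ n ∈ range N, (1 - q ^ (a * n + b)) * (1 - q ^ (a * n + (a - b))) := by
    rw [qPochhammer, ← prod_mul_distrib]
    refine prod_congr rfl fun n _ => ?_
    rw [← pow_mul, mul_add_one, mul_assoc]
  have hreindex : ∑ m ∈ Icc (-N : ℤ) N, (-1 : R) ^ m.natAbs * q ^ thetaExponent a b m
      = ∑ k ∈ range (2 * N + 1), (-1) ^ ((k : ℤ) - N).natAbs * q ^ thetaExponent a b (k - N) :=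
    (sum_nbij' (fun k : ℕ => (k : ℤ) - N) (fun m => (m + N).toNat) (by simp; omega)
      (by simp; omega) (by simp) (by simp; omega) (by simp)).symm
  rw [hprod, prod_one_sub_pow_mul_one_sub_pow_eq_sum_gaussBinom hq hb, hreindex, mul_sum,
    ← sum_sub_distrib]
  refine dvd_sum fun k hk => ?_
  have hk : k ≤ 2 * N := Nat.lt_succ_iff.mp (mem_range.mp hk)
  obtain ⟨j, hj⟩ : ∃ j, N + k = ((k : ℤ) - N).natAbs + 2 * j := ⟨min k N, by omega⟩
  have hsign : (-1 : R) ^ (N + k) = (-1) ^ ((k : ℤ) - N).natAbs := by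
    rw [hj, pow_add, pow_mul, neg_one_sq, one_pow, mul_one]
  set r := N - ((k : ℤ) - N).natAbs
  have hcong := pow_succ_dvd_qPochhammer_mul_gaussBinom_sub_one (q ^ a) (m := N) (r := r) hk
    (by omega) (by omega) (by omega)
  have hN : N ≤ a * (r + 1) + thetaExponent a b (k - N) := by
    have := natAbs_le_thetaExponent_add_one ha hb ((k : ℤ) - N)
    have := Nat.le_mul_of_pos_left (r + 1) ha
    omega
  calc q ^ N ∣ q ^ (a * (r + 1)) * q ^ thetaExponent a b (k - N) := by
        rw [← pow_add]; exact pow_dvd_pow q hN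
    _ ∣ (qPochhammer (q ^ a) N * gaussBinom (q ^ a) (2 * N) k - 1)
          * q ^ thetaExponent a b (k - N) :=
        mul_dvd_mul_right (pow_mul q a (r + 1) ▸ hcong) _
    _ ∣ _ := Dvd.intro_left ((-1) ^ ((k : ℤ) - N).natAbs) (by rw [hsign]; ring)

end FiniteTripleProduct

namespace PowerSeries.WithPiTopology

open Filter Topology

variable {R : Type*} [CommRing R] [TopologicalSpace R]

lemma multipliable_of_X_pow_dvd_sub_one {f : ℕ → R⟦X⟧} (hf : ∀ n, X ^ n ∣ f n - 1) :
    Multipliable f := by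
  have h := multipliable_one_add_of_tendsto_order_atTop_nhds_top R (f := fun n => f n - 1) <|
    ENat.tendsto_nhds_top_iff_natCast_lt.mpr fun d => eventually_atTop.mpr ⟨d + 1, fun n hn =>
      (Nat.cast_lt.mpr hn).trans_le (nat_le_order _ _ fun i hi => X_pow_dvd_iff.mp (hf n) i hi)⟩
  simpa using h

lemma eq_of_tendsto_of_X_pow_dvd_sub [T2Space R] {F S : ℕ → R⟦X⟧} {A B : R⟦X⟧}
    (hF : Tendsto F atTop (𝓝 A)) (hS : Tendsto S atTop (𝓝 B)) (h : ∀ N, X ^ N ∣ F N - S N) :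
    A = B := by
  ext d
  refine tendsto_nhds_unique (((continuous_coeff R d).tendsto A).comp hF) <|
    (((continuous_coeff R d).tendsto B).comp hS).congr' <|
      eventually_atTop.mpr ⟨d + 1, fun N hN => ?_⟩
  have := X_pow_dvd_iff.mp (h N) d (by omega)
  rw [map_sub, sub_eq_zero] at this
  exact this.symm

variable {a b : ℕ}

lemma summable_neg_one_pow_mul_X_pow_thetaExponent (ha : 0 < a) (hb : b ≤ a) :
    Summable fun m : ℤ => (-1 : R⟦X⟧) ^ m.natAbs * X ^ thetaExponent a b m := by
  rw [summable_iff_summable_coeff]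
  refine fun d => summable_of_ne_finset_zero (s := Icc (-(d + 1) : ℤ) (d + 1)) fun m hm => ?_
  have := natAbs_le_thetaExponent_add_one ha hb m
  rw [mem_Icc] at hm
  rw [mul_comm, coeff_X_pow_mul', if_neg (by omega)]

theorem tprod_eq_tsum_thetaExponent [T2Space R] (ha : 0 < a) (hb : b ≤ a) :
    ∏' n : ℕ, (1 - (X : R⟦X⟧) ^ (a * n + a)) * (1 - X ^ (a * n + b)) * (1 - X ^ (a * n + (a - b)))
      = ∑' m : ℤ, (-1 : R⟦X⟧) ^ m.natAbs * X ^ thetaExponent a b m := by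
  have hfactor : ∀ {n e₁ e₂ e₃ : ℕ}, n ≤ e₁ → n ≤ e₂ → n ≤ e₃ →
      (X : R⟦X⟧) ^ n ∣ (1 - X ^ e₁) * (1 - X ^ e₂) * (1 - X ^ e₃) - 1 := by
    intro n e₁ e₂ e₃ h₁ h₂ h₃
    rw [show (1 - X ^ e₁) * (1 - X ^ e₂) * (1 - X ^ e₃) - 1
      = -(X ^ e₁ * (1 - X ^ e₂) * (1 - X ^ e₃) + X ^ e₂ * (1 - X ^ e₃) + X ^ e₃ : R⟦X⟧) by ring]
    exact (dvd_add (dvd_add (((pow_dvd_pow X h₁).mul_right _).mul_right _)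
      ((pow_dvd_pow X h₂).mul_right _)) (pow_dvd_pow X h₃)).neg_right
  have hmult : Multipliable fun n : ℕ =>
      (1 - (X : R⟦X⟧) ^ (a * n + a)) * (1 - X ^ (a * n + b)) * (1 - X ^ (a * n + (a - b))) :=
    multipliable_of_X_pow_dvd_sub_one fun n => by
      have := Nat.le_mul_of_pos_left n ha
      exact hfactor (by omega) (by omega) (by omega)
  exact eq_of_tendsto_of_X_pow_dvd_sub hmult.tendsto_prod_tprod_nat
    ((summable_neg_one_pow_mul_X_pow_thetaExponent ha hb).hasSum.comp tendsto_Icc_neg)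
    (pow_dvd_prod_sub_sum_thetaExponent (fun _ _ => X_mul_cancel) ha hb)

end PowerSeries.WithPiTopology

/-- Euler-type product = bilateral theta sum: the specialization `u = q⁴`, `v = q`
of the Jacobi triple product identity. -/
theorem jacobi_specialization_one :
    (∏' n : ℕ, ((1 - (X : ℤ⟦X⟧) ^ (5 * n + 5)) * (1 - X ^ (5 * n + 4)) * (1 - X ^ (5 * n + 1))))
      = ∑' k : ℤ, ((-1 : ℤ⟦X⟧) ^ k.natAbs * X ^ (k * (5 * k + 3) / 2).toNat) := by
  have hexp : ∀ k : ℤ, thetaExponent 5 4 k = (k * (5 * k + 3) / 2).toNat := fun k => by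
    rw [thetaExponent,
      show ((5 : ℕ) : ℤ) * k + 2 * (4 : ℕ) - (5 : ℕ) = 5 * k + 3 by push_cast; ring]
  have h := PowerSeries.WithPiTopology.tprod_eq_tsum_thetaExponent (R := ℤ) (a := 5) (b := 4)
    (by norm_num) (by norm_num)
  simp only [hexp, Nat.reduceSub] at h
  exact h
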